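/- arXiv:1009.6040 — 2 statements merged into one kernel-verified Lean document; each statement's English description precedes it below -/
import Mathlib

section
/- Under the hypotheses of the zig-zag lemma for a double complex with row-contracting homotopy h, the collapsing map Ψ(c) = (−Dh)^k c − h(−Dh)^{k-1}(Dc) − h(−Dh)^k(δc), applied to c in column k, satisfies δ(Ψ(c)) = 0; i.e. Ψ(c) lies in the kernel of the horizontal differential. -/
/-!
With `A = -(D h)`, the relations give `δ A = D + A δ` and `D A = 0`, hence
`δ A^k = A^{k-1} D + A^k δ` for `k ≥ 1`. So `Ψ_k = (1 - h δ) A^k`, and `δ (1 - h δ) = h δ δ = 0`.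
-/

/-- The collapsing operator of the zig-zag lemma:
`Ψ_k = (−Dh)^k − h(−Dh)^{k-1}D − h(−Dh)^k δ`. -/
def zigzagPsi {R : Type*} [Ring R] (δ D h : R) (k : ℕ) : R :=
  (-(D * h)) ^ k - h * (-(D * h)) ^ (k - 1) * D - h * (-(D * h)) ^ k * δ

section Zigzag

variable {R : Type*} [Ring R]

theorem mul_pow_succ_eq_of_mul_eq_add {δ A D : R} (hδA : δ * A = D + A * δ) (hDA : D * A = 0)
    (n : ℕ) : δ * A ^ (n + 1) = A ^ n * D + A ^ (n + 1) * δ := by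
  induction n with
  | zero => simpa using hδA
  | succ n ih =>
    calc δ * A ^ (n + 2) = (δ * A) * A ^ (n + 1) := by rw [pow_succ' A (n + 1), mul_assoc]
      _ = D * A * A ^ n + A * (δ * A ^ (n + 1)) := by rw [hδA, pow_succ' A n]; noncomm_ring
      _ = A ^ (n + 1) * D + A ^ (n + 2) * δ := by
        rw [hDA, ih, pow_succ' A (n + 1), pow_succ' A n]; noncomm_ring

variable {δ D h : R}

theorem mul_neg_mul_eq_add (hanti : δ * D + D * δ = 0) (hcontr : δ * h + h * δ = 1) :
    δ * -(D * h) = D + -(D * h) * δ := by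
  have hδD : δ * D = -(D * δ) := eq_neg_of_add_eq_zero_left hanti
  calc δ * -(D * h) = -(δ * D * h) := by noncomm_ring
    _ = D * (δ * h) := by rw [hδD]; noncomm_ring
    _ = D + -(D * h) * δ := by rw [eq_sub_of_add_eq hcontr]; noncomm_ring

theorem zigzagPsi_eq_one_sub_mul_pow (hD : D * D = 0) (hanti : δ * D + D * δ = 0)
    (hcontr : δ * h + h * δ = 1) {k : ℕ} (hk : 1 ≤ k) :
    zigzagPsi δ D h k = (1 - h * δ) * (-(D * h)) ^ k := by
  obtain ⟨n, rfl⟩ := Nat.exists_eq_add_of_le' hk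
  have hDA : D * -(D * h) = 0 := by rw [mul_neg, ← mul_assoc, hD, zero_mul, neg_zero]
  have hδA := mul_pow_succ_eq_of_mul_eq_add (mul_neg_mul_eq_add hanti hcontr) hDA n
  rw [zigzagPsi, Nat.add_sub_cancel, sub_mul, one_mul, mul_assoc h δ, hδA]
  noncomm_ring

theorem mul_one_sub_mul_eq_zero (hδ : δ * δ = 0) (hcontr : δ * h + h * δ = 1) :
    δ * (1 - h * δ) = 0 := by
  calc δ * (1 - h * δ) = δ - (δ * h) * δ := by noncomm_ring
    _ = h * (δ * δ) := by rw [eq_sub_of_add_eq hcontr]; noncomm_ring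
    _ = 0 := by rw [hδ, mul_zero]

end Zigzag

/-- For `c` in column `k ≥ 2`, the collapsed cochain `Ψ(c)` is killed by the
horizontal differential: `δ(Ψ(c)) = 0`. -/
theorem zigzagPsi_delta {R : Type*} [Ring R] (δ D h : R)
    (hδ : δ * δ = 0) (hD : D * D = 0) (hanti : δ * D + D * δ = 0)
    (hcontr : δ * h + h * δ = 1) (k : ℕ) (hk : 2 ≤ k) :
    δ * zigzagPsi δ D h k = 0 := by
  rw [zigzagPsi_eq_one_sub_mul_pow hD hanti hcontr (by omega), ← mul_assoc,
    mul_one_sub_mul_eq_zero hδ hcontr, zero_mul]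
end

section
/- Under the hypotheses of the zig-zag lemma with row-contracting homotopy h, the collapsing map Ψ is a chain map: Ψ(δc + Dc) = D(Ψ(c)) for c in column k, where Ψ is given by Ψ(c) = (−Dh)^k c − h(−Dh)^{k-1}(Dc) − h(−Dh)^k(δc). -/
section

variable {R : Type*} [Ring R] {δ D : R} (h : R)

theorem mul_neg_mul_pow_succ_eq_zero (hD : D * D = 0) (n : ℕ) :
    D * (-(D * h)) ^ (n + 1) = 0 := by
  rw [pow_succ', ← mul_assoc, mul_neg, ← mul_assoc, hD, zero_mul, neg_zero, zero_mul]

theorem zigzagPsi_mul_add_zigzagPsi_succ_mul (hδ : δ * δ = 0) (hD : D * D = 0)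
    (hanti : δ * D + D * δ = 0) (k : ℕ) :
    zigzagPsi δ D h k * D + zigzagPsi δ D h (k + 1) * δ =
      (-(D * h)) ^ k * D + (-(D * h)) ^ (k + 1) * δ := by
  calc _ = (-(D * h)) ^ k * D + (-(D * h)) ^ (k + 1) * δ
          - h * (-(D * h)) ^ (k - 1) * (D * D) - h * (-(D * h)) ^ k * (δ * D + D * δ)
          - h * (-(D * h)) ^ (k + 1) * (δ * δ) := by
        simp only [zigzagPsi, Nat.add_sub_cancel]; noncomm_ring
    _ = _ := by rw [hD, hanti, hδ]; simp only [mul_zero, sub_zero]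

theorem mul_zigzagPsi_succ (hD : D * D = 0) (n : ℕ) :
    D * zigzagPsi δ D h (n + 1) = (-(D * h)) ^ (n + 1) * D + (-(D * h)) ^ (n + 2) * δ := by
  have hDa := mul_neg_mul_pow_succ_eq_zero h hD n
  simp only [zigzagPsi, Nat.add_sub_cancel, mul_sub, ← mul_assoc]
  set a := -(D * h)
  have hDh : D * h = -a := (neg_neg _).symm
  rw [hDa, hDh, pow_succ' a (n + 1), pow_succ' a n]
  noncomm_ring

end

theorem zigzagPsi_chain_map_general {R : Type*} [Ring R] (δ D h : R)
    (hδ : δ * δ = 0) (hD : D * D = 0) (hanti : δ * D + D * δ = 0)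
    (k : ℕ) (hk : 1 ≤ k) :
    zigzagPsi δ D h k * D + zigzagPsi δ D h (k + 1) * δ = D * zigzagPsi δ D h k := by
  obtain ⟨n, rfl⟩ := Nat.exists_eq_add_of_le' hk
  rw [zigzagPsi_mul_add_zigzagPsi_succ_mul h hδ hD hanti, mul_zigzagPsi_succ h hD]

/-- The collapsing map is a chain map: `Ψ^k(Dc) + Ψ^{k+1}(δc) = D Ψ^k(c)`. -/
theorem zigzagPsi_chain_map {R : Type*} [Ring R] (δ D h : R)
    (hδ : δ * δ = 0) (hD : D * D = 0) (hanti : δ * D + D * δ = 0)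
    (hcontr : δ * h + h * δ = 1) (k : ℕ) (hk : 1 ≤ k) :
    zigzagPsi δ D h k * D + zigzagPsi δ D h (k + 1) * δ = D * zigzagPsi δ D h k :=
  zigzagPsi_chain_map_general δ D h hδ hD hanti k hk
end
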